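/- Let Λ, Y ∈ S^m be real symmetric m×m matrices such that Y∘Λ = 0 and Y ∈ Φ(Λ), i.e., ⟨W∘W, Λ⟩ > 0 for every nonzero W ∈ S^m with Y∘W = 0. Then rank Λ = m − rank Y. -/

import Mathlib

open Matrix

noncomputable section

def jmul {m : ℕ} (A B : Matrix (Fin m) (Fin m) ℝ) : Matrix (Fin m) (Fin m) ℝ :=
  (1 / 2 : ℝ) • (A * B + B * A)

def minner {m : ℕ} (A B : Matrix (Fin m) (Fin m) ℝ) : ℝ :=
  (A * B).trace

def memPhi {m : ℕ} (Λ Y : Matrix (Fin m) (Fin m) ℝ) : Prop :=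
  ∀ W : Matrix (Fin m) (Fin m) ℝ, W.IsSymm → W ≠ 0 → jmul Y W = 0 →
    0 < minner (jmul W W) Λ

def pderivG {n m : ℕ} (G : (Fin n → ℝ) → Matrix (Fin m) (Fin m) ℝ)
    (x : Fin n → ℝ) (k : Fin n) : Matrix (Fin m) (Fin m) ℝ :=
  Matrix.of fun i j => fderiv ℝ (fun y => G y i j) x (Pi.single k 1)

def dirDerivG {n m : ℕ} (G : (Fin n → ℝ) → Matrix (Fin m) (Fin m) ℝ)
    (x v : Fin n → ℝ) : Matrix (Fin m) (Fin m) ℝ :=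
  ∑ k, v k • pderivG G x k

def adjDG {n m : ℕ} (G : (Fin n → ℝ) → Matrix (Fin m) (Fin m) ℝ)
    (x : Fin n → ℝ) (W : Matrix (Fin m) (Fin m) ℝ) : Fin n → ℝ :=
  fun k => minner (pderivG G x k) W

def gradf {n : ℕ} (f : (Fin n → ℝ) → ℝ) (x : Fin n → ℝ) : Fin n → ℝ :=
  fun k => fderiv ℝ f x (Pi.single k 1)

def KKT1 {n m : ℕ} (f : (Fin n → ℝ) → ℝ) (G : (Fin n → ℝ) → Matrix (Fin m) (Fin m) ℝ)
    (x : Fin n → ℝ) (Λ : Matrix (Fin m) (Fin m) ℝ) : Prop :=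
  gradf f x = adjDG G x Λ ∧ Λ.PosSemidef ∧ (G x).PosSemidef ∧ jmul Λ (G x) = 0

def KKT2 {n m : ℕ} (f : (Fin n → ℝ) → ℝ) (G : (Fin n → ℝ) → Matrix (Fin m) (Fin m) ℝ)
    (x : Fin n → ℝ) (Y Λ : Matrix (Fin m) (Fin m) ℝ) : Prop :=
  gradf f x = adjDG G x Λ ∧ jmul Λ Y = 0 ∧ G x = jmul Y Y

def hessQ {n m : ℕ} (f : (Fin n → ℝ) → ℝ) (G : (Fin n → ℝ) → Matrix (Fin m) (Fin m) ℝ)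
    (Λ : Matrix (Fin m) (Fin m) ℝ) (x v : Fin n → ℝ) : ℝ :=
  iteratedFDeriv ℝ 2 (fun y => f y - minner (G y) Λ) x ![v, v]

def SOSCNLP {n m : ℕ} (f : (Fin n → ℝ) → ℝ) (G : (Fin n → ℝ) → Matrix (Fin m) (Fin m) ℝ)
    (x : Fin n → ℝ) (Y Λ : Matrix (Fin m) (Fin m) ℝ) : Prop :=
  ∀ (v : Fin n → ℝ) (W : Matrix (Fin m) (Fin m) ℝ), W.IsSymm →
    ¬(v = 0 ∧ W = 0) → dirDerivG G x v = (2 : ℝ) • jmul Y W →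
    0 < hessQ f G Λ x v + 2 * minner (jmul W W) Λ

def SONCNLP {n m : ℕ} (f : (Fin n → ℝ) → ℝ) (G : (Fin n → ℝ) → Matrix (Fin m) (Fin m) ℝ)
    (x : Fin n → ℝ) (Y Λ : Matrix (Fin m) (Fin m) ℝ) : Prop :=
  ∀ (v : Fin n → ℝ) (W : Matrix (Fin m) (Fin m) ℝ), W.IsSymm →
    dirDerivG G x v = (2 : ℝ) • jmul Y W →
    0 ≤ hessQ f G Λ x v + 2 * minner (jmul W W) Λ

def LICQ {n m : ℕ} (G : (Fin n → ℝ) → Matrix (Fin m) (Fin m) ℝ)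
    (x : Fin n → ℝ) (Y : Matrix (Fin m) (Fin m) ℝ) : Prop :=
  ∀ W : Matrix (Fin m) (Fin m) ℝ, W.IsSymm → jmul Y W = 0 → adjDG G x W = 0 → W = 0

def Nondeg {n m : ℕ} (G : (Fin n → ℝ) → Matrix (Fin m) (Fin m) ℝ)
    (x : Fin n → ℝ) : Prop :=
  ∀ W : Matrix (Fin m) (Fin m) ℝ, W.IsSymm → G x * W = 0 → adjDG G x W = 0 → W = 0

def CritCone {n m : ℕ} (f : (Fin n → ℝ) → ℝ) (G : (Fin n → ℝ) → Matrix (Fin m) (Fin m) ℝ)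
    (x : Fin n → ℝ) : Set (Fin n → ℝ) :=
  {d | (∀ u : Fin m → ℝ, G x *ᵥ u = 0 → 0 ≤ u ⬝ᵥ (dirDerivG G x d *ᵥ u)) ∧
    gradf f x ⬝ᵥ d = 0}

def IsMPInv {m : ℕ} (A P : Matrix (Fin m) (Fin m) ℝ) : Prop :=
  A * P * A = A ∧ P * A * P = P ∧ (A * P)ᵀ = A * P ∧ (P * A)ᵀ = P * A

def Hmat {n m : ℕ} (G : (Fin n → ℝ) → Matrix (Fin m) (Fin m) ℝ)
    (x : Fin n → ℝ) (Λ P : Matrix (Fin m) (Fin m) ℝ) : Matrix (Fin n) (Fin n) ℝ :=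
  Matrix.of fun i j => 2 * (pderivG G x i * P * pderivG G x j * Λ).trace


/-!
Since `YΛ = -ΛY`, the matrix `Λ` maps each `μ`-eigenvector `v` of `Y` to a `-μ`-eigenvector, and
`vᵀΛv = 0` whenever `μ ≠ 0`. For such `v` the matrix `W = v(Λv)ᵀ + (Λv)vᵀ` anticommutes with `Y`
while `⟨W², Λ⟩ = 0`, so the condition `Y ∈ Φ(Λ)` forces `Λv = 0`; hence `ΛY = 0`. For `u ∈ ker Y`,
the choice `W = uuᵀ` gives `uᵀΛu > 0`, so `ker Λ ∩ ker Y = 0`. Now `range Y ⊆ ker Λ` and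
`ker Λ ∩ ker Y = 0` pin down `dim ker Λ = rank Y`.
-/

section CommRing

variable {R n : Type*} [CommRing R] [Fintype n]

theorem Matrix.trace_vecMulVec_mul (a c : n → R) (M : Matrix n n R) :
    (vecMulVec a c * M).trace = c ⬝ᵥ (M *ᵥ a) := by
  rw [vecMulVec_mul, trace_vecMulVec, dotProduct_comm, ← dotProduct_mulVec]

theorem Matrix.trace_vecMulVec_add_vecMulVec_sq_mul {a b : n → R} (hab : a ⬝ᵥ b = 0)
    (M : Matrix n n R) :
    ((vecMulVec a b + vecMulVec b a) * (vecMulVec a b + vecMulVec b a) * M).trace =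
      (b ⬝ᵥ b) * (a ⬝ᵥ (M *ᵥ a)) + (a ⬝ᵥ a) * (b ⬝ᵥ (M *ᵥ b)) := by
  simp only [mul_add, add_mul, vecMulVec_mul_vecMulVec, dotProduct_comm b a, hab, zero_smul,
    vecMulVec_zero, vecMulVec_smul, zero_add, add_zero, smul_mul, trace_add, trace_smul,
    trace_vecMulVec_mul, smul_eq_mul]
  exact add_comm _ _

theorem Matrix.IsSymm.mul_vecMulVec_add_vecMulVec_mul_eq_zero {Y : Matrix n n R} (hY : Y.IsSymm)
    {a b : n → R} {μ : R} (ha : Y *ᵥ a = μ • a) (hb : Y *ᵥ b = -μ • b) :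
    Y * vecMulVec a b + vecMulVec a b * Y = 0 := by
  rw [mul_vecMulVec, vecMulVec_mul, ← mulVec_transpose, hY.eq, ha, hb, smul_vecMulVec,
    vecMulVec_smul, neg_smul, add_neg_cancel]

end CommRing

section Field

variable {K n : Type*} [Field K] [Fintype n]

theorem Matrix.rank_eq_card_sub_rank_of_mul_eq_zero_of_disjoint_ker (A B : Matrix n n K)
    (hAB : A * B = 0)
    (hker : Disjoint (LinearMap.ker A.mulVecLin) (LinearMap.ker B.mulVecLin)) :
    A.rank = Fintype.card n - B.rank := by
  have hrange : LinearMap.range B.mulVecLin ≤ LinearMap.ker A.mulVecLin := by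
    rintro _ ⟨v, rfl⟩
    simp [mulVec_mulVec, hAB]
  have hA := A.mulVecLin.finrank_range_add_finrank_ker
  have hB := B.mulVecLin.finrank_range_add_finrank_ker
  have hle := Submodule.finrank_mono hrange
  have hdisj := Submodule.finrank_add_finrank_le_of_disjoint hker
  rw [Module.finrank_fintype_fun_eq_card] at hA hB hdisj
  unfold Matrix.rank
  omega

theorem Matrix.IsSymm.dotProduct_mulVec_eq_zero_of_mulVec_eq_smul [CharZero K]
    {Y Λ : Matrix n n K} (hY : Y.IsSymm) (hYΛ : Y * Λ + Λ * Y = 0) {v : n → K} {μ : K}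
    (hv : Y *ᵥ v = μ • v) (hμ : μ ≠ 0) : v ⬝ᵥ (Λ *ᵥ v) = 0 := by
  have h := congrArg (fun M => v ⬝ᵥ (M *ᵥ v)) hYΛ
  simp only [add_mulVec, ← mulVec_mulVec, dotProduct_add, zero_mulVec, dotProduct_zero] at h
  rw [dotProduct_mulVec v Y, ← mulVec_transpose, hY.eq, hv, mulVec_smul, smul_dotProduct,
    dotProduct_smul, smul_eq_mul, ← two_mul, ← mul_assoc] at h
  exact (mul_eq_zero.mp h).resolve_left (mul_ne_zero two_ne_zero hμ)

end Field

theorem Matrix.IsHermitian.mul_eq_zero_of_mulVec_eigenvectorBasis_eq_zero {𝕜 n : Type*}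
    [RCLike 𝕜] [Fintype n] [DecidableEq n] {A B : Matrix n n 𝕜} (hA : A.IsHermitian)
    (hB : ∀ j, hA.eigenvalues j ≠ 0 → B *ᵥ ⇑(hA.eigenvectorBasis j) = 0) :
    B * A = 0 := by
  have hdiag : B * (hA.eigenvectorUnitary : Matrix n n 𝕜) *
      diagonal (RCLike.ofReal ∘ hA.eigenvalues) = 0 := by
    ext i j
    rw [mul_diagonal]
    by_cases hj : hA.eigenvalues j = 0
    · simp [hj]
    · have hcol := congrFun (hB j hj) i
      simp_all [mul_apply, mulVec, dotProduct]
  conv_lhs =>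
    rw [hA.spectral_theorem, Unitary.conjStarAlgAut_apply, ← mul_assoc, ← mul_assoc, hdiag]
  simp

section JordanProduct

variable {m : ℕ} {Λ Y : Matrix (Fin m) (Fin m) ℝ}

theorem jmul_eq_zero_iff {A B : Matrix (Fin m) (Fin m) ℝ} :
    jmul A B = 0 ↔ A * B + B * A = 0 := by
  rw [jmul, smul_eq_zero]
  norm_num

theorem jmul_self (W : Matrix (Fin m) (Fin m) ℝ) : jmul W W = W * W := by
  rw [jmul, ← two_smul ℝ (W * W), smul_smul]
  norm_num

theorem trace_mul_self_mul_pos_of_memPhi (hPhi : memPhi Λ Y) {W : Matrix (Fin m) (Fin m) ℝ}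
    (hW : W.IsSymm) (hW0 : W ≠ 0) (hYW : Y * W + W * Y = 0) : 0 < (W * W * Λ).trace := by
  simpa [minner, jmul_self] using hPhi W hW hW0 (jmul_eq_zero_iff.mpr hYW)

theorem dotProduct_mulVec_pos_of_memPhi (hY : Y.IsSymm) (hPhi : memPhi Λ Y) {u : Fin m → ℝ}
    (hu : Y *ᵥ u = 0) (hu0 : u ≠ 0) : 0 < u ⬝ᵥ (Λ *ᵥ u) := by
  have hYW : Y * vecMulVec u u + vecMulVec u u * Y = 0 :=
    hY.mul_vecMulVec_add_vecMulVec_mul_eq_zero (μ := 0) (by simp [hu]) (by simp [hu])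
  have hpos := trace_mul_self_mul_pos_of_memPhi hPhi (transpose_vecMulVec u u)
    (by simpa using hu0) hYW
  rw [vecMulVec_mul_vecMulVec, trace_vecMulVec_mul, smul_dotProduct, smul_eq_mul] at hpos
  exact pos_of_mul_pos_right hpos (Fintype.sum_nonneg fun i => mul_self_nonneg (u i))

theorem disjoint_ker_of_memPhi (hY : Y.IsSymm) (hPhi : memPhi Λ Y) :
    Disjoint (LinearMap.ker Λ.mulVecLin) (LinearMap.ker Y.mulVecLin) := by
  rw [Submodule.disjoint_def]
  intro u hΛu hYu
  by_contra hu0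
  have hpos := dotProduct_mulVec_pos_of_memPhi hY hPhi hYu hu0
  simp_all

theorem mulVec_eq_zero_of_memPhi (hY : Y.IsSymm) (hYΛ : jmul Y Λ = 0) (hPhi : memPhi Λ Y)
    {v : Fin m → ℝ} {μ : ℝ} (hv : Y *ᵥ v = μ • v) (hμ : μ ≠ 0) : Λ *ᵥ v = 0 := by
  have hanti : Y * Λ + Λ * Y = 0 := jmul_eq_zero_iff.mp hYΛ
  set b := Λ *ᵥ v with hb_def
  have hb : Y *ᵥ b = -μ • b := by
    rw [hb_def, mulVec_mulVec, eq_neg_of_add_eq_zero_left hanti, neg_mulVec, ← mulVec_mulVec, hv,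
      mulVec_smul, neg_smul]
  have hvb : v ⬝ᵥ b = 0 := hY.dotProduct_mulVec_eq_zero_of_mulVec_eq_smul hanti hv hμ
  have hbΛb : b ⬝ᵥ (Λ *ᵥ b) = 0 :=
    hY.dotProduct_mulVec_eq_zero_of_mulVec_eq_smul hanti hb (neg_ne_zero.mpr hμ)
  by_contra hb0
  set W := vecMulVec v b + vecMulVec b v with hW_def
  have hW : W.IsSymm := by simp [W, IsSymm, transpose_vecMulVec, add_comm]
  have hW0 : W ≠ 0 := by
    intro h
    have hv0 : v ≠ 0 := by rintro rfl; simp [b] at hb0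
    have hWv := congrArg (· *ᵥ v) h
    simp only [W, add_mulVec, vecMulVec_mulVec, dotProduct_comm b v, hvb, MulOpposite.op_zero,
      zero_smul, op_smul_eq_smul, zero_add, zero_mulVec, smul_eq_zero,
      dotProduct_self_eq_zero] at hWv
    exact hWv.elim hv0 hb0
  have hYW : Y * W + W * Y = 0 := by
    have h1 := hY.mul_vecMulVec_add_vecMulVec_mul_eq_zero hv hb
    have h2 := hY.mul_vecMulVec_add_vecMulVec_mul_eq_zero hb (by rwa [neg_neg])
    rw [hW_def, mul_add, add_mul, add_add_add_comm, h1, h2, add_zero]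
  have hpos := trace_mul_self_mul_pos_of_memPhi hPhi hW hW0 hYW
  rw [hW_def, trace_vecMulVec_add_vecMulVec_sq_mul hvb, ← hb_def, hvb, hbΛb] at hpos
  simp at hpos

end JordanProduct

theorem stmt1_general {m : ℕ} (Λ Y : Matrix (Fin m) (Fin m) ℝ)
    (hY : Y.IsSymm)
    (hYΛ : jmul Y Λ = 0) (hPhi : memPhi Λ Y) :
    Λ.rank = m - Y.rank := by
  have hYh : Y.IsHermitian := isHermitian_iff_isSymm.mpr hY
  have hΛY : Λ * Y = 0 := hYh.mul_eq_zero_of_mulVec_eigenvectorBasis_eq_zero fun j hj =>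
    mulVec_eq_zero_of_memPhi hY hYΛ hPhi (hYh.mulVec_eigenvectorBasis j) hj
  simpa using rank_eq_card_sub_rank_of_mul_eq_zero_of_disjoint_ker Λ Y hΛY
    (disjoint_ker_of_memPhi hY hPhi)

theorem stmt1 {m : ℕ} (Λ Y : Matrix (Fin m) (Fin m) ℝ)
    (hΛ : Λ.IsSymm) (hY : Y.IsSymm)
    (hYΛ : jmul Y Λ = 0) (hPhi : memPhi Λ Y) :
    Λ.rank = m - Y.rank :=
  stmt1_general Λ Y hY hYΛ hPhi
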